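/- If a stochastic choice function p is rationalizable on a menu M by an MSC model that is fully comparable on M, then p(i|M) > 0 for every i ∈ M, and p(·|M) is bounded in a cycle over every ordered pair of distinct alternatives of M. -/

import Mathlib

open Finset

variable {X : Type*} [DecidableEq X]

/-- The menus relevant to an MSC model on `M`: `M` itself and the two-element subsets of `M`. -/
def RelMenu (M N : Finset X) : Prop := N = M ∨ (N ⊆ M ∧ N.card = 2)

/-- `Q` is row-stochastic on `N`: nonnegative entries, rows summing to 1. -/
def RowStochOn (N : Finset X) (Q : X → X → ℝ) : Prop :=
  (∀ i ∈ N, ∀ j ∈ N, 0 ≤ Q i j) ∧ ∀ i ∈ N, ∑ j ∈ N, Q i j = 1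

/-- The axioms of an MSC model on the menu `M`: row-stochasticity on relevant menus,
(A1) prolonged consideration, (A2) pairwise comparability on binary sets, (A3) TR-IIA. -/
def IsMSC (M : Finset X) (q : Finset X → X → X → ℝ) : Prop :=
  (∀ N, RelMenu M N → RowStochOn N (q N)) ∧
  (∀ N, RelMenu M N → ∀ i ∈ N, 0 < q N i i) ∧
  (∀ i ∈ M, ∀ j ∈ M, i ≠ j → q {i, j} i j = 0 → 0 < q {i, j} j i) ∧
  (∀ N, RelMenu M N → ∀ i ∈ N, ∀ j ∈ N, i ≠ j →
    q {i, j} i j * q N j i = q {i, j} j i * q N i j)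

/-- `p` is a stochastic choice function. -/
def IsSCF (p : Finset X → X → ℝ) : Prop :=
  ∀ N : Finset X, N.Nonempty →
    (∀ i, 0 ≤ p N i) ∧ (∀ i, i ∉ N → p N i = 0) ∧ ∑ i ∈ N, p N i = 1

/-- `σ` is a stationary (row) vector of `Q` on `N`, i.e. `σ (I - Q) = 0` on `N`. -/
def StationaryOn (N : Finset X) (Q : X → X → ℝ) (σ : X → ℝ) : Prop :=
  ∀ j ∈ N, ∑ i ∈ N, σ i * Q i j = σ j

/-- The MSC model `q` rationalizes `p` on the menu `M`. -/
def Rationalizes (M : Finset X) (q : Finset X → X → X → ℝ) (p : Finset X → X → ℝ) : Prop :=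
  IsMSC M q ∧ ∀ N, RelMenu M N → StationaryOn N (q N) (p N)

/-- The weighted difference in choice probabilities `δ_ij(M)`. -/
def delta (p : Finset X → X → ℝ) (M : Finset X) (i j : X) : ℝ :=
  p M i * p {i, j} j - p {i, j} i * p M j

/-- The set of ordered pairs of consecutive elements (with wrap-around) of a list. -/
def cyclePairs (c : List X) : List (X × X) := c.zip (c.rotate 1)

/-- `c` is a cycle of distinct alternatives lying in (a subset of) `M`. -/
def IsCycleIn (M : Finset X) (c : List X) : Prop :=
  c.Nodup ∧ 2 ≤ c.length ∧ ∀ x ∈ c, x ∈ M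

/-- All pairs of the cycle have strictly positive `δ`. -/
def PosConsistent (p : Finset X → X → ℝ) (M : Finset X) (c : List X) : Prop :=
  ∀ pr ∈ cyclePairs c, 0 < delta p M pr.1 pr.2

/-- All pairs of the cycle have strictly negative `δ`. -/
def NegConsistent (p : Finset X → X → ℝ) (M : Finset X) (c : List X) : Prop :=
  ∀ pr ∈ cyclePairs c, delta p M pr.1 pr.2 < 0

/-- `p(·|M)` is bounded in a cycle over the pair `(i, j)`. -/
def BoundedInCycle (p : Finset X → X → ℝ) (M : Finset X) (i j : X) : Prop :=
  delta p M i j = 0 ∨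
    ∃ c : List X, IsCycleIn M c ∧ (i, j) ∈ cyclePairs c ∧
      (PosConsistent p M c ∨ NegConsistent p M c)

/-!
The net flow `F u v = p(u|M) q_uv(M) - p(v|M) q_vu(M)` of the chain `q(M)` is antisymmetric and,
by stationarity of `p(·|M)`, divergence free. A two-state chain is always reversible, and TR-IIA
transfers the reversibility of `q({u,v})` to `q(M)`: `p(u|{u,v}) q_uv(M) = p(v|{u,v}) q_vu(M)`.
Hence `δ_uv(M) q_vu(M) = p(u|{u,v}) F u v`, so under full comparability `δ_uv(M)` has the sign of
`F u v`. Finally, a divergence-free antisymmetric flow with `F i j > 0` runs along a cycle of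
positive arcs through `(i, j)`: otherwise the alternatives reachable from `j` along positive arcs
would form a set with zero net inflow that nevertheless receives positive flow from `i`.
Positivity of `p(·|M)` is immediate from stationarity, since under full comparability and (A1)
every alternative is entered with positive probability from every state.
-/

theorem forall_mem_cyclePairs_cons_iff {α : Type*} {R : α → α → Prop} {a : α} {l : List α} :
    (∀ pr ∈ cyclePairs (a :: l), R pr.1 pr.2) ↔ (a :: l ++ [a]).IsChain R := by
  rw [List.isChain_cons_append_singleton_iff_forall₂, List.forall₂_iff_zip, cyclePairs,
    List.rotate_cons_succ, List.rotate_zero]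
  simp

theorem getLast_mem_zip_append_singleton {α : Type*} (a b : α) (l : List α) :
    ((a :: l).getLast (List.cons_ne_nil a l), b) ∈ (a :: l).zip (l ++ [b]) := by
  induction l generalizing a with
  | nil => simp
  | cons c l ih => simpa using Or.inr (ih c)

theorem getLast_head_mem_cyclePairs {α : Type*} (a : α) (l : List α) :
    ((a :: l).getLast (List.cons_ne_nil a l), a) ∈ cyclePairs (a :: l) := by
  rw [cyclePairs, List.rotate_cons_succ, List.rotate_zero]
  exact getLast_mem_zip_append_singleton a a l

theorem exists_nodup_isChain_of_reflTransGen {α : Type*} {r : α → α → Prop} {a b : α}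
    (h : Relation.ReflTransGen r a b) :
    ∃ l, (a :: l).IsChain r ∧ (a :: l).getLast (List.cons_ne_nil a l) = b ∧ (a :: l).Nodup := by
  induction h using Relation.ReflTransGen.head_induction_on with
  | refl => exact ⟨[], .singleton _, rfl, List.nodup_singleton _⟩
  | @head a c hac _ ih =>
    obtain ⟨l, hchain, hlast, hnodup⟩ := ih
    by_cases ha : a ∈ c :: l
    · -- `a` already occurs on the chain: keep its suffix starting at `a`
      obtain ⟨s, t, hst⟩ := List.append_of_mem ha
      have hsuffix : a :: t <:+ c :: l := ⟨s, hst.symm⟩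
      refine ⟨t, hchain.suffix hsuffix, ?_, hnodup.sublist hsuffix.sublist⟩
      rw [← hlast]
      simp only [hst, List.getLast_append_of_ne_nil _ (List.cons_ne_nil a t)]
    · exact ⟨c :: l, hchain.cons_cons hac, by simpa using hlast, List.nodup_cons.2 ⟨ha, hnodup⟩⟩

section Flow

variable {α : Type*} {M : Finset α} {f : α → α → ℝ}

theorem sum_sum_eq_zero_of_antisymm (hf : ∀ u v, f u v = -f v u) (S : Finset α) :
    ∑ u ∈ S, ∑ v ∈ S, f v u = 0 := by
  have h : ∑ u ∈ S, ∑ v ∈ S, f v u = -∑ u ∈ S, ∑ v ∈ S, f v u :=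
    calc ∑ u ∈ S, ∑ v ∈ S, f v u = ∑ u ∈ S, ∑ v ∈ S, f u v := Finset.sum_comm
      _ = -∑ u ∈ S, ∑ v ∈ S, f v u := by simp_rw [← Finset.sum_neg_distrib, ← hf]
  linarith

theorem sum_sum_sdiff_eq_zero [DecidableEq α] (hf : ∀ u v, f u v = -f v u)
    (hdiv : ∀ u ∈ M, ∑ v ∈ M, f v u = 0) {S : Finset α} (hS : S ⊆ M) :
    ∑ u ∈ S, ∑ v ∈ M \ S, f v u = 0 := by
  have h : ∑ u ∈ S, ∑ v ∈ M, f v u = 0 := Finset.sum_eq_zero fun u hu => hdiv u (hS hu)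
  simp_rw [← Finset.sum_sdiff hS, Finset.sum_add_distrib, sum_sum_eq_zero_of_antisymm hf,
    add_zero] at h
  exact h

def PosArc (M : Finset α) (f : α → α → ℝ) (u v : α) : Prop := u ∈ M ∧ v ∈ M ∧ 0 < f u v

theorem reflTransGen_posArc (hf : ∀ u v, f u v = -f v u) (hdiv : ∀ u ∈ M, ∑ v ∈ M, f v u = 0)
    {i j : α} (hi : i ∈ M) (hj : j ∈ M) (hij : 0 < f i j) :
    Relation.ReflTransGen (PosArc M f) j i := by
  classical
  set S := M.filter (Relation.ReflTransGen (PosArc M f) j)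
  by_contra hji
  have hjS : j ∈ S := Finset.mem_filter.2 ⟨hj, .refl⟩
  have hiS : i ∈ M \ S := by simp [S, hi, hji]
  have hinflow : ∀ u ∈ S, ∀ v ∈ M \ S, 0 ≤ f v u := by
    intro u hu v hv
    simp only [S, Finset.mem_sdiff, Finset.mem_filter, not_and] at hu hv
    rw [hf]
    by_contra! hvu
    exact hv.2 hv.1 (hu.2.tail ⟨hu.1, hv.1, by linarith⟩)
  have hpos : 0 < ∑ u ∈ S, ∑ v ∈ M \ S, f v u :=
    Finset.sum_pos' (fun u hu => Finset.sum_nonneg (hinflow u hu))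
      ⟨j, hjS, Finset.sum_pos' (hinflow j hjS) ⟨i, hiS, hij⟩⟩
  exact hpos.ne' (sum_sum_sdiff_eq_zero hf hdiv (Finset.filter_subset _ _))

theorem exists_cycle_posArc (hf : ∀ u v, f u v = -f v u) (hdiv : ∀ u ∈ M, ∑ v ∈ M, f v u = 0)
    {i j : α} (hi : i ∈ M) (hj : j ∈ M) (hij : 0 < f i j) :
    ∃ c, IsCycleIn M c ∧ (i, j) ∈ cyclePairs c ∧ ∀ pr ∈ cyclePairs c, PosArc M f pr.1 pr.2 := by
  obtain ⟨l, hchain, hlast, hnodup⟩ :=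
    exists_nodup_isChain_of_reflTransGen (reflTransGen_posArc hf hdiv hi hj hij)
  have hcycle : (j :: l ++ [j]).IsChain (PosArc M f) := by
    rw [List.isChain_append]
    refine ⟨hchain, .singleton j, fun x hx y hy => ?_⟩
    rw [List.getLast?_eq_some_getLast (List.cons_ne_nil j l), hlast, Option.mem_some_iff] at hx
    rw [List.head?_cons, Option.mem_some_iff] at hy
    exact hx ▸ hy ▸ ⟨hi, hj, hij⟩
  have hl : l ≠ [] := by
    rintro rfl
    have : f i i = 0 := by linarith [hf i i]
    exact (hlast ▸ this ▸ hij).false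
  refine ⟨j :: l, ⟨hnodup, by simpa [Nat.one_le_iff_ne_zero] using hl, ?_⟩,
    hlast ▸ getLast_head_mem_cyclePairs j l, forall_mem_cyclePairs_cons_iff.2 hcycle⟩
  exact hchain.induction (· ∈ M) _ (fun _ _ h _ => h.2.1) fun _ => hj

end Flow

theorem boundedInCycle_of_sign_eq {M : Finset X} {p : Finset X → X → ℝ} {f : X → X → ℝ}
    (hf : ∀ u v, f u v = -f v u) (hdiv : ∀ u ∈ M, ∑ v ∈ M, f v u = 0)
    (hsign : ∀ u ∈ M, ∀ v ∈ M, SignType.sign (delta p M u v) = SignType.sign (f u v))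
    {i j : X} (hi : i ∈ M) (hj : j ∈ M) : BoundedInCycle p M i j := by
  rcases lt_trichotomy (f i j) 0 with hneg | hzero | hpos
  · obtain ⟨c, hc, hijc, hcyc⟩ := exists_cycle_posArc (f := -f) (fun u v => by simp [hf u v])
      (fun u hu => by simp [hdiv u hu]) hi hj (by simpa using hneg)
    refine Or.inr ⟨c, hc, hijc, Or.inr fun pr hpr => ?_⟩
    obtain ⟨h1, h2, hlt⟩ := hcyc pr hpr
    rw [← sign_eq_neg_one_iff, hsign _ h1 _ h2, sign_eq_neg_one_iff]
    simpa using hlt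
  · exact Or.inl (by rw [← sign_eq_zero_iff, hsign i hi j hj, hzero, sign_zero])
  · obtain ⟨c, hc, hijc, hcyc⟩ := exists_cycle_posArc hf hdiv hi hj hpos
    refine Or.inr ⟨c, hc, hijc, Or.inl fun pr hpr => ?_⟩
    obtain ⟨h1, h2, hlt⟩ := hcyc pr hpr
    rwa [← sign_eq_one_iff, hsign _ h1 _ h2, sign_eq_one_iff]

section Stationary

variable {α : Type*} {N : Finset α} {Q : α → α → ℝ} {σ : α → ℝ}

theorem StationaryOn.pos_of_forall_pos (hstat : StationaryOn N Q σ) (hσ : ∀ k ∈ N, 0 ≤ σ k)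
    (hσN : ∑ k ∈ N, σ k = 1) {i : α} (hi : i ∈ N) (hQ : ∀ k ∈ N, 0 < Q k i) : 0 < σ i := by
  by_contra! hσi
  have hzero : ∀ k ∈ N, σ k = 0 := by
    intro k hk
    have hle : σ k * Q k i ≤ σ i := hstat i hi ▸
      Finset.single_le_sum (fun k hk => mul_nonneg (hσ k hk) (hQ k hk).le) hk
    exact le_antisymm (by nlinarith [hQ k hk]) (hσ k hk)
  simp [Finset.sum_eq_zero hzero] at hσN

theorem StationaryOn.balance_of_pair [DecidableEq α] {u v : α} (huv : u ≠ v)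
    (hstat : StationaryOn {u, v} Q σ) (hrow : ∑ w ∈ {u, v}, Q v w = 1) :
    σ u * Q u v = σ v * Q v u := by
  have hv := hstat v (by simp)
  rw [Finset.sum_pair huv] at hv hrow
  linear_combination hv - σ v * hrow

def netFlow (Q : α → α → ℝ) (σ : α → ℝ) (u v : α) : ℝ := σ u * Q u v - σ v * Q v u

theorem netFlow_antisymm (u v : α) : netFlow Q σ u v = -netFlow Q σ v u := by
  unfold netFlow; ring

theorem StationaryOn.sum_netFlow_eq_zero (hstat : StationaryOn N Q σ)
    (hrow : ∀ u ∈ N, ∑ v ∈ N, Q u v = 1) {u : α} (hu : u ∈ N) : ∑ v ∈ N, netFlow Q σ v u = 0 := by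
  simp only [netFlow, Finset.sum_sub_distrib, ← Finset.mul_sum, hstat u hu, hrow u hu, mul_one,
    sub_self]

end Stationary

theorem RelMenu.self {α : Type*} (M : Finset α) : RelMenu M M := Or.inl rfl

section MSC

variable {M : Finset X} {p : Finset X → X → ℝ} {q : Finset X → X → X → ℝ}

theorem RelMenu.pair {u v : X} (hu : u ∈ M) (hv : v ∈ M) (huv : u ≠ v) : RelMenu M {u, v} :=
  Or.inr ⟨Finset.insert_subset hu (Finset.singleton_subset_iff.2 hv), Finset.card_pair huv⟩

theorem IsMSC.pair_pos (h : IsMSC M q) (hfc : ∀ i ∈ M, ∀ j ∈ M, i ≠ j → 0 < q M i j)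
    {u v : X} (hu : u ∈ M) (hv : v ∈ M) (huv : u ≠ v) : 0 < q {u, v} u v := by
  obtain ⟨hrow, -, hA2, hA3⟩ := h
  refine ((hrow _ (.pair hu hv huv)).1 u (by simp) v (by simp)).lt_of_ne' fun h0 => ?_
  have htr := hA3 M (.self M) u hu v hv huv
  rw [h0, zero_mul] at htr
  exact (mul_pos (hA2 u hu v hv huv h0) (hfc u hu v hv huv)).ne htr

theorem Rationalizes.pos_of_mem (hrat : Rationalizes M q p) (hp : IsSCF p)
    (hfc : ∀ i ∈ M, ∀ j ∈ M, i ≠ j → 0 < q M i j) {i : X} (hi : i ∈ M) : 0 < p M i := by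
  obtain ⟨hσ, -, hsum⟩ := hp M ⟨i, hi⟩
  refine (hrat.2 M (.self M)).pos_of_forall_pos (fun k _ => hσ k) hsum hi fun k hk => ?_
  rcases eq_or_ne k i with rfl | hki
  · exact hrat.1.2.1 M (.self M) k hk
  · exact hfc k hk i hi hki

theorem Rationalizes.pair_pos (hrat : Rationalizes M q p) (hp : IsSCF p)
    (hfc : ∀ i ∈ M, ∀ j ∈ M, i ≠ j → 0 < q M i j) {u v : X} (hu : u ∈ M) (hv : v ∈ M)
    (huv : u ≠ v) : 0 < p {u, v} u := by
  obtain ⟨hσ, -, hsum⟩ := hp {u, v} (Finset.insert_nonempty u {v})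
  refine (hrat.2 _ (.pair hu hv huv)).pos_of_forall_pos (fun k _ => hσ k) hsum (by simp)
    fun k hk => ?_
  rw [Finset.mem_insert, Finset.mem_singleton] at hk
  rcases hk with rfl | rfl
  · exact hrat.1.2.1 _ (.pair hu hv huv) k (by simp)
  · rw [Finset.pair_comm]
    exact hrat.1.pair_pos hfc hv hu huv.symm

theorem Rationalizes.balance_of_pair (hrat : Rationalizes M q p)
    (hfc : ∀ i ∈ M, ∀ j ∈ M, i ≠ j → 0 < q M i j) {u v : X} (hu : u ∈ M) (hv : v ∈ M)
    (huv : u ≠ v) : p {u, v} u * q M u v = p {u, v} v * q M v u := by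
  have hrel := RelMenu.pair hu hv huv
  have hbin := (hrat.2 _ hrel).balance_of_pair huv ((hrat.1.1 _ hrel).2 v (by simp))
  have htr := hrat.1.2.2.2 M (.self M) u hu v hv huv
  refine mul_left_cancel₀ (hrat.1.pair_pos hfc hu hv huv).ne' ?_
  linear_combination q M u v * hbin - p {u, v} v * htr

theorem Rationalizes.sign_delta (hrat : Rationalizes M q p) (hp : IsSCF p)
    (hfc : ∀ i ∈ M, ∀ j ∈ M, i ≠ j → 0 < q M i j) {u v : X} (hu : u ∈ M) (hv : v ∈ M) :
    SignType.sign (delta p M u v) = SignType.sign (netFlow (q M) (p M) u v) := by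
  rcases eq_or_ne u v with rfl | huv
  · simp [delta, netFlow, mul_comm]
  have key : delta p M u v * q M v u = p {u, v} u * netFlow (q M) (p M) u v := by
    unfold delta netFlow
    linear_combination (-p M u) * hrat.balance_of_pair hfc hu hv huv
  have hsign := congrArg SignType.sign key
  rwa [sign_mul, sign_mul, sign_pos (hfc v hv u hu huv.symm),
    sign_pos (hrat.pair_pos hp hfc hu hv huv), mul_one, one_mul] at hsign

end MSC

theorem stmt7_general (M : Finset X)
    (p : Finset X → X → ℝ) (hp : IsSCF p)
    (q : Finset X → X → X → ℝ) (hrat : Rationalizes M q p)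
    (hfc : ∀ i ∈ M, ∀ j ∈ M, i ≠ j → 0 < q M i j) :
    (∀ i ∈ M, 0 < p M i) ∧
    (∀ i ∈ M, ∀ j ∈ M, i ≠ j → BoundedInCycle p M i j) := by
  have hstat := hrat.2 M (.self M)
  have hrow := (hrat.1.1 M (.self M)).2
  refine ⟨fun i hi => hrat.pos_of_mem hp hfc hi, fun i hi j hj _ => ?_⟩
  exact boundedInCycle_of_sign_eq (fun _ _ => netFlow_antisymm _ _)
    (fun u hu => hstat.sum_netFlow_eq_zero hrow hu) (fun u hu v hv => hrat.sign_delta hp hfc hu hv)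
    hi hj

/-- If `p` is rationalizable on `M` by an MSC model that is fully comparable on `M`,
then `p(·|M)` is positive and bounded in a cycle over every ordered pair of distinct
alternatives of `M`. -/
theorem stmt7 (M : Finset X) (hM : M.Nonempty)
    (p : Finset X → X → ℝ) (hp : IsSCF p)
    (q : Finset X → X → X → ℝ) (hrat : Rationalizes M q p)
    (hfc : ∀ i ∈ M, ∀ j ∈ M, i ≠ j → 0 < q M i j) :
    (∀ i ∈ M, 0 < p M i) ∧
    (∀ i ∈ M, ∀ j ∈ M, i ≠ j → BoundedInCycle p M i j) :=
  stmt7_general M p hp q hrat hfc
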